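/- The load-balancing two-sided facility location game has the finite improvement property: every sequence of strictly improving relocations by facility agents (each evaluated at the unique client-equilibrium loads) is finite. This follows because the sorted (increasing) vector of facility equilibrium loads is an ordinal potential function that lexicographically strictly increases with every improving move, and loads take only finitely many possible values x/y with x ≤ total client weight and 1 ≤ y ≤ k. -/

import Mathlib

open Finset OrderDual

/-- Load of facility `j` under weight distribution `σ`. -/
def load {n k : ℕ} (σ : Fin n → Fin k → ℝ) (j : Fin k) : ℝ := ∑ i, σ i j

/-- A feasible client weight distribution: nonnegative, supported on accessible
facilities, and clients with a nonempty accessible set distribute their full weight. -/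
def Feasible {n k : ℕ} (w : Fin n → ℝ) (N : Fin n → Finset (Fin k))
    (σ : Fin n → Fin k → ℝ) : Prop :=
  (∀ i j, 0 ≤ σ i j) ∧
  (∀ i j, j ∉ N i → σ i j = 0) ∧
  (∀ i, (N i).Nonempty → ∑ j ∈ N i, σ i j = w i)

/-- Client equilibrium: no client puts positive weight on a facility while a
strictly less loaded accessible facility exists. -/
def ClientEq {n k : ℕ} (w : Fin n → ℝ) (N : Fin n → Finset (Fin k))
    (σ : Fin n → Fin k → ℝ) : Prop :=
  Feasible w N σ ∧
  ∀ i : Fin n, ∀ j ∈ N i, ∀ j' ∈ N i, 0 < σ i j → load σ j ≤ load σ j'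

/-- Facilities accessible to client `i` under placement `s`. -/
def NsF {n k : ℕ} (E : Fin n → Fin n → Bool) (s : Fin k → Fin n) (i : Fin n) :
    Finset (Fin k) :=
  Finset.univ.filter (fun j => s j = i ∨ E i (s j) = true)

/-!
An improving move by `p` raises `p`'s load, and every facility whose load drops still ends at or
above `p`'s new load. So if loads are ordered reversely, the multiset of all loads decreases in the
Dershowitz–Manna order (equivalently, the sorted load vector increases lexicographically): every
new load dominates a removed old load, its own if it grew and `p`'s old load otherwise. Equilibrium
loads have the form `x / y` with `x ≤ ∑ w` and `1 ≤ y ≤ k`, so they range over a finite set, on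
which that order is well-founded.
-/

section ImprovingStep

variable {ι α : Type*} [LinearOrder α]

def IsImprovingStep (ℓ ℓ' : ι → α) (p : ι) : Prop :=
  ℓ p < ℓ' p ∧ ∀ q, ℓ' q < ℓ q → ℓ' p ≤ ℓ' q

variable [Fintype ι]

theorem IsImprovingStep.isDershowitzMannaLT {ℓ ℓ' : ι → α} {p : ι}
    (h : IsImprovingStep ℓ ℓ' p) :
    Multiset.IsDershowitzMannaLT (univ.val.map (toDual ∘ ℓ')) (univ.val.map (toDual ∘ ℓ)) := by
  classical
  obtain ⟨hp, hdec⟩ := h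
  set s := (univ : Finset ι).val
  have split (f : ι → α) : s.map (toDual ∘ f) =
      (s.filter fun j => ℓ j = ℓ' j).map (toDual ∘ f) +
        (s.filter fun j => ℓ j ≠ ℓ' j).map (toDual ∘ f) := by
    rw [← Multiset.map_add, Multiset.filter_add_not]
  have same : (s.filter fun j => ℓ j = ℓ' j).map (toDual ∘ ℓ') =
      (s.filter fun j => ℓ j = ℓ' j).map (toDual ∘ ℓ) :=
    Multiset.map_congr rfl fun j hj => by simp [(Multiset.mem_filter.1 hj).2]
  refine ⟨_, _, _, ?_, by rw [split ℓ', same], split ℓ, ?_⟩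
  · exact Multiset.card_pos.1 <| Multiset.card_pos_iff_exists_mem.2
      ⟨_, Multiset.mem_map_of_mem _ (Multiset.mem_filter.2 ⟨mem_univ p, hp.ne⟩)⟩
  · simp only [Multiset.mem_map, Multiset.mem_filter, Function.comp_apply]
    rintro _ ⟨j, ⟨-, hj⟩, rfl⟩
    rcases lt_or_gt_of_ne hj with hlt | hgt
    · exact ⟨_, ⟨j, ⟨mem_univ j, hj⟩, rfl⟩, toDual_lt_toDual.2 hlt⟩
    · exact ⟨_, ⟨p, ⟨mem_univ p, hp.ne⟩, rfl⟩, toDual_lt_toDual.2 (hp.trans_le (hdec j hgt))⟩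

theorem not_forall_exists_isImprovingStep [Finite α] (ℓ : ℕ → ι → α) :
    ¬ ∀ t, ∃ p, IsImprovingStep (ℓ t) (ℓ (t + 1)) p := by
  intro h
  have : IsWellFounded (Multiset αᵒᵈ) Multiset.IsDershowitzMannaLT :=
    ⟨Multiset.wellFounded_isDershowitzMannaLT⟩
  obtain ⟨t, ht⟩ := WellFounded.not_rel_apply_succ (r := Multiset.IsDershowitzMannaLT)
    fun t => univ.val.map (toDual ∘ ℓ t)
  obtain ⟨p, hp⟩ := h t
  exact ht hp.isDershowitzMannaLT

theorem not_forall_exists_isImprovingStep_of_mem {L : Set α} (hL : L.Finite) (ℓ : ℕ → ι → α)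
    (hℓ : ∀ t j, ℓ t j ∈ L) : ¬ ∀ t, ∃ p, IsImprovingStep (ℓ t) (ℓ (t + 1)) p := by
  have := hL.to_subtype
  simpa only [IsImprovingStep, Subtype.mk_lt_mk, Subtype.mk_le_mk] using
    not_forall_exists_isImprovingStep fun t j => (⟨ℓ t j, hℓ t j⟩ : L)

end ImprovingStep

section Feasible

variable {n k : ℕ} {w : Fin n → ℝ} {N N' : Fin n → Finset (Fin k)} {σ σ' : Fin n → Fin k → ℝ}

theorem Feasible.mem_of_pos (h : Feasible w N σ) {i : Fin n} {j : Fin k} (hj : 0 < σ i j) :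
    j ∈ N i := by
  by_contra hjN
  exact hj.ne' (h.2.1 i j hjN)

theorem Feasible.sum_eq_of_support (h : Feasible w N σ) {i : Fin n} (hne : (N i).Nonempty)
    {D : Finset (Fin k)} (hD : ∀ j, 0 < σ i j → j ∈ D) : ∑ j ∈ D, σ i j = w i := by
  calc ∑ j ∈ D, σ i j = ∑ j, σ i j :=
        sum_subset (subset_univ D) fun j _ hj => (not_lt.1 (mt (hD j) hj)).antisymm (h.1 i j)
    _ = ∑ j ∈ N i, σ i j := (sum_subset (subset_univ _) fun j _ hj => h.2.1 i j hj).symm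
    _ = w i := h.2.2 i hne

theorem Feasible.sum_le (h : Feasible w N σ) {i : Fin n} (hne : (N i).Nonempty)
    (D : Finset (Fin k)) : ∑ j ∈ D, σ i j ≤ w i := by
  rw [← h.sum_eq_of_support hne (D := univ) fun j _ => mem_univ j]
  exact sum_le_sum_of_subset_of_nonneg (subset_univ D) fun j _ _ => h.1 i j

theorem Feasible.sum_eq_zero_or_eq (h : Feasible w N σ) (i : Fin n) {D : Finset (Fin k)}
    (hD : ∀ q ∈ D, 0 < σ i q → ∀ j, 0 < σ i j → j ∈ D) :
    ∑ j ∈ D, σ i j = 0 ∨ ∑ j ∈ D, σ i j = w i := by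
  by_cases hpos : ∃ q ∈ D, 0 < σ i q
  · obtain ⟨q, hqD, hq⟩ := hpos
    exact .inr (h.sum_eq_of_support ⟨q, h.mem_of_pos hq⟩ (hD q hqD hq))
  · push Not at hpos
    exact .inl (sum_eq_zero fun j hj => (hpos j hj).antisymm (h.1 i j))

theorem Feasible.sum_le_sum_of_support (h : Feasible w N σ) (h' : Feasible w N' σ') (i : Fin n)
    {D : Finset (Fin k)}
    (hD : ∀ q ∈ D, 0 < σ i q → (N' i).Nonempty ∧ ∀ j, 0 < σ' i j → j ∈ D) :
    ∑ j ∈ D, σ i j ≤ ∑ j ∈ D, σ' i j := by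
  by_cases hpos : ∃ q ∈ D, 0 < σ i q
  · obtain ⟨q, hqD, hq⟩ := hpos
    obtain ⟨hne', hsupp⟩ := hD q hqD hq
    rw [h'.sum_eq_of_support hne' hsupp]
    exact h.sum_le ⟨q, h.mem_of_pos hq⟩ D
  · push Not at hpos
    exact (sum_nonpos hpos).trans (sum_nonneg fun j _ => h'.1 i j)

end Feasible

theorem sum_load {n k : ℕ} (σ : Fin n → Fin k → ℝ) (D : Finset (Fin k)) :
    ∑ j ∈ D, load σ j = ∑ i, ∑ j ∈ D, σ i j :=
  sum_comm

section ClientEq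

variable {n k : ℕ} {w : Fin n → ℝ} {N N' : Fin n → Finset (Fin k)} {σ σ' : Fin n → Fin k → ℝ}

theorem ClientEq.load_eq_of_pos (h : ClientEq w N σ) {i : Fin n} {j j' : Fin k}
    (hj : 0 < σ i j) (hj' : 0 < σ i j') : load σ j = load σ j' :=
  (h.2 i j (h.1.mem_of_pos hj) j' (h.1.mem_of_pos hj') hj).antisymm
    (h.2 i j' (h.1.mem_of_pos hj') j (h.1.mem_of_pos hj) hj')

theorem ClientEq.exists_card_mul_load_eq (h : ClientEq w N σ) (j : Fin k) :
    ∃ A : Finset (Fin k), j ∈ A ∧ ∃ I : Finset (Fin n), A.card * load σ j = ∑ i ∈ I, w i := by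
  classical
  set A := univ.filter fun j' => load σ j' = load σ j
  have hA : ∀ i, ∑ j' ∈ A, σ i j' = 0 ∨ ∑ j' ∈ A, σ i j' = w i := fun i =>
    h.1.sum_eq_zero_or_eq i fun q hq hpos j' hj' => by
      simpa [A, ← (mem_filter.1 hq).2] using h.load_eq_of_pos hj' hpos
  refine ⟨A, by simp [A], univ.filter fun i => ∑ j' ∈ A, σ i j' ≠ 0, ?_⟩
  calc A.card * load σ j = ∑ j' ∈ A, load σ j' := by
        rw [sum_congr rfl fun j' hj' => (mem_filter.1 hj').2, sum_const, nsmul_eq_mul]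
    _ = ∑ i, ∑ j' ∈ A, σ i j' := sum_load σ A
    _ = ∑ i ∈ univ.filter fun i => ∑ j' ∈ A, σ i j' ≠ 0, w i := by
        rw [sum_filter]
        exact sum_congr rfl fun i _ => by rcases hA i with h0 | hw <;> simp_all

theorem ClientEq.load_le_of_load_lt (h : ClientEq w N σ) (h' : ClientEq w N' σ') {p : Fin k}
    (hN : ∀ i, ∀ j ≠ p, (j ∈ N i ↔ j ∈ N' i)) {q : Fin k} (hq : load σ' q < load σ q) :
    load σ' p ≤ load σ' q := by
  classical
  by_contra! hqp
  set c := load σ' q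
  set D := univ.filter fun j => load σ' j ≤ c ∧ c < load σ j
  have hqD : q ∈ D := mem_filter.2 ⟨mem_univ q, le_rfl, hq⟩
  -- A client with weight on `D` before the move puts all of its weight on `D` afterwards,
  -- so the total load on `D` cannot drop; yet every facility of `D` lost load.
  have hclient (i : Fin n) : ∑ j ∈ D, σ i j ≤ ∑ j ∈ D, σ' i j := by
    refine h.1.sum_le_sum_of_support h'.1 i fun r hrD hr => ?_
    obtain ⟨hr'c, hcr⟩ := (mem_filter.1 hrD).2
    have hrN' : r ∈ N' i := (hN i r (by rintro rfl; linarith)).1 (h.1.mem_of_pos hr)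
    refine ⟨⟨r, hrN'⟩, fun j hj => ?_⟩
    have hjN' := h'.1.mem_of_pos hj
    have hjc : load σ' j ≤ c := (h'.2 i j hjN' r hrN' hj).trans hr'c
    have hjN : j ∈ N i := (hN i j (by rintro rfl; linarith)).2 hjN'
    exact mem_filter.2 ⟨mem_univ j, hjc, hcr.trans_le (h.2 i r (h.1.mem_of_pos hr) j hjN hr)⟩
  have hle : ∑ j ∈ D, load σ j ≤ ∑ j ∈ D, load σ' j := by
    rw [sum_load, sum_load]
    exact sum_le_sum fun i _ => hclient i
  have hlt : ∑ j ∈ D, load σ' j < ∑ j ∈ D, load σ j :=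
    sum_lt_sum_of_nonempty ⟨q, hqD⟩ fun j hj => (mem_filter.1 hj).2.1.trans_lt (mem_filter.1 hj).2.2
  linarith

theorem ClientEq.isImprovingStep (h : ClientEq w N σ) (h' : ClientEq w N' σ') {p : Fin k}
    (hN : ∀ i, ∀ j ≠ p, (j ∈ N i ↔ j ∈ N' i)) (hp : load σ p < load σ' p) :
    IsImprovingStep (load σ) (load σ') p :=
  ⟨hp, fun _ hq => h.load_le_of_load_lt h' hN hq⟩

end ClientEq

section Game

variable {n k : ℕ} {N : Fin n → Finset (Fin k)} {σ : Fin n → Fin k → ℝ}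

noncomputable def loadValues (W k : ℕ) : Finset ℝ :=
  (range (W + 1) ×ˢ Icc 1 k).image fun xy => (xy.1 : ℝ) / xy.2

theorem ClientEq.load_mem_loadValues {w : Fin n → ℕ} (h : ClientEq (fun i => (w i : ℝ)) N σ)
    (j : Fin k) : load σ j ∈ loadValues (∑ i, w i) k := by
  obtain ⟨A, hjA, I, hAI⟩ := h.exists_card_mul_load_eq j
  have hA : 0 < A.card := card_pos.2 ⟨j, hjA⟩
  refine mem_image.2 ⟨(∑ i ∈ I, w i, A.card), mem_product.2 ⟨?_, mem_Icc.2 ⟨hA, ?_⟩⟩, ?_⟩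
  · exact mem_range.2 (Nat.lt_succ_of_le (sum_le_sum_of_subset (subset_univ I)))
  · simpa using card_le_univ A
  · rw [div_eq_iff (by positivity)]
    push_cast
    linarith

theorem mem_NsF_update_iff {E : Fin n → Fin n → Bool} {s : Fin k → Fin n} {p j : Fin k}
    (hj : j ≠ p) (v i : Fin n) : j ∈ NsF E (Function.update s p v) i ↔ j ∈ NsF E s i := by
  simp [NsF, Function.update_of_ne hj]

end Game

theorem finite_improvement_property_general (n k : ℕ)
    (w : Fin n → ℕ) (E : Fin n → Fin n → Bool) :
    ¬ ∃ (S : ℕ → Fin k → Fin n) (σ : ℕ → Fin n → Fin k → ℝ),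
        (∀ t : ℕ, ClientEq (fun i => (w i : ℝ)) (NsF E (S t)) (σ t)) ∧
        (∀ t : ℕ, ∃ (p : Fin k) (v : Fin n),
          S (t + 1) = Function.update (S t) p v ∧
          load (σ t) p < load (σ (t + 1)) p) := by
  rintro ⟨S, σ, hEq, hMove⟩
  refine not_forall_exists_isImprovingStep_of_mem (loadValues (∑ i, w i) k).finite_toSet
    (fun t => load (σ t)) (fun t j => (hEq t).load_mem_loadValues j) fun t => ?_
  obtain ⟨p, v, hS, hp⟩ := hMove t
  refine ⟨p, (hEq t).isImprovingStep (hEq (t + 1)) (fun i j hj => ?_) hp⟩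
  rw [hS, mem_NsF_update_iff hj]

/-- Finite improvement property: there is no infinite sequence of facility
placement profiles together with client equilibria in which every step is a
strictly improving relocation by some facility. -/
theorem finite_improvement_property (n k : ℕ)
    (w : Fin n → ℕ) (hw : ∀ i, 0 < w i) (E : Fin n → Fin n → Bool) :
    ¬ ∃ (S : ℕ → Fin k → Fin n) (σ : ℕ → Fin n → Fin k → ℝ),
        (∀ t : ℕ, ClientEq (fun i => (w i : ℝ)) (NsF E (S t)) (σ t)) ∧
        (∀ t : ℕ, ∃ (p : Fin k) (v : Fin n),
          S (t + 1) = Function.update (S t) p v ∧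
          load (σ t) p < load (σ (t + 1)) p) :=
  finite_improvement_property_general n k w E
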